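/- arXiv:1803.04808 — 3 statements merged into one kernel-verified Lean document; each statement's English description precedes it below -/
import Mathlib

section
/- Let (A, →, ⊤) be a BCI-algebra whose induced partial order ⪯ is a meet-semilattice with meet ∧ satisfying x→(y∧z) = (x→y)∧(x→z) for all x, y, z ∈ A. Let 𝔸 = {(a,b) ∈ A×A : a ⪯ b}, and for X, Y ∈ 𝔸 define X ⇛ Y = [X̄→Y̲, X̲→Ȳ] and X ⇒ Y = [(X̲→Y̲)∧(X̄→Ȳ), X̲→Ȳ]. Then for all X, Y, Z ∈ 𝔸: X ⇛ Y ≾ (Z ⇛ X) ⇒ (Z ⇛ Y), where ≾ is the Kulisch–Miranker order (U ≾ V iff U̲ ⪯ V̲ and Ū ⪯ V̄). -/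
/-- The best interval representation ⇛ : X ⇛ Y = [X̄→Y̲, X̲→Ȳ],
represented on pairs of endpoints. -/
def intervalArr9 {A : Type*} (imp : A → A → A) (P Q : A × A) : A × A :=
  (imp P.2 Q.1, imp P.1 Q.2)

/-- The interval implication ⇒ : X ⇒ Y = [(X̲→Y̲)∧(X̄→Ȳ), X̲→Ȳ],
represented on pairs of endpoints. -/
def intervalImp9 {A : Type*} (imp meet : A → A → A) (P Q : A × A) : A × A :=
  (meet (imp P.1 Q.1) (imp P.2 Q.2), imp P.1 Q.2)

/-! Both bounds reduce to the BCI laws: `→` is antitone in its first and monotone in its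
second argument, and `a → b ⪯ (c → a) → (c → b)`. Chaining these with transitivity of `⪯`
gives `X̄ → Y̲ ⪯ (Z̄ → X̲) → (Z̄ → Y̲)` and `X̄ → Y̲ ⪯ (Z̲ → X̄) → (Z̲ → Ȳ)`, hence the lower bound
below their meet, and `X̲ → Ȳ ⪯ (Z̄ → X̲) → (Z̲ → Ȳ)` for the upper bound. -/

structure IsBCIAlgebra {A : Type*} (imp : A → A → A) (top : A) : Prop where
  imp_imp_imp : ∀ x y z : A, imp (imp y z) (imp (imp z x) (imp y x)) = top
  imp_imp_self : ∀ x y : A, imp x (imp (imp x y) y) = top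
  imp_self : ∀ x : A, imp x x = top
  antisymm : ∀ x y : A, imp x y = top → imp y x = top → x = y

namespace IsBCIAlgebra

variable {A : Type*} {imp : A → A → A} {top : A}

theorem top_imp (h : IsBCIAlgebra imp top) (x : A) : imp top x = x := by
  have hxx := h.imp_self x
  have top_le : imp top (imp (imp top x) x) = top := h.imp_imp_self top x
  have le_top : imp (imp (imp top x) x) top = top := by
    simpa only [hxx, top_le] using h.imp_imp_imp x (imp top x) x
  have top_imp_le : imp (imp top x) x = top := h.antisymm _ _ le_top top_le
  have le_top_imp : imp x (imp top x) = top := by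
    simpa only [hxx] using h.imp_imp_self x x
  exact h.antisymm _ _ top_imp_le le_top_imp

theorem imp_le_imp_left (h : IsBCIAlgebra imp top) {x y : A} (hxy : imp x y = top) (z : A) :
    imp (imp y z) (imp x z) = top := by
  simpa only [hxy, h.top_imp] using h.imp_imp_imp z x y

theorem le_trans (h : IsBCIAlgebra imp top) {x y z : A} (hxy : imp x y = top)
    (hyz : imp y z = top) :
    imp x z = top := by
  simpa only [hyz, h.top_imp] using h.imp_le_imp_left hxy z

theorem imp_le_imp_imp_imp (h : IsBCIAlgebra imp top) (a b c : A) :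
    imp (imp a b) (imp (imp c a) (imp c b)) = top :=
  h.le_trans (h.imp_imp_self (imp a b) (imp c b))
    (h.imp_le_imp_left (h.imp_imp_imp b c a) _)

theorem imp_le_imp_right (h : IsBCIAlgebra imp top) {y z : A} (hyz : imp y z = top) (x : A) :
    imp (imp x y) (imp x z) = top := by
  simpa only [hyz, h.top_imp] using h.imp_le_imp_imp_imp y z x

end IsBCIAlgebra

theorem stmt_9_general {A : Type*} (imp : A → A → A) (top : A) (meet : A → A → A)
    (c1 : ∀ x y z : A, imp (imp y z) (imp (imp z x) (imp y x)) = top)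
    (c2 : ∀ x y : A, imp x (imp (imp x y) y) = top)
    (c3 : ∀ x : A, imp x x = top)
    (c4 : ∀ x y : A, imp x y = top → imp y x = top → x = y)
    (le_meet : ∀ a b c : A, imp c a = top → imp c b = top → imp c (meet a b) = top) :
    ∀ X Y Z : A × A,
      imp X.1 X.2 = top → imp Y.1 Y.2 = top → imp Z.1 Z.2 = top →
      imp (intervalArr9 imp X Y).1
        (intervalImp9 imp meet (intervalArr9 imp Z X) (intervalArr9 imp Z Y)).1 = top ∧
      imp (intervalArr9 imp X Y).2
        (intervalImp9 imp meet (intervalArr9 imp Z X) (intervalArr9 imp Z Y)).2 = top := by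
  have h : IsBCIAlgebra imp top := ⟨c1, c2, c3, c4⟩
  intro X Y Z hX hY hZ
  refine ⟨le_meet _ _ _ ?_ ?_, ?_⟩
  · exact h.le_trans (h.imp_le_imp_left hX _) (h.imp_le_imp_imp_imp X.1 Y.1 Z.2)
  · exact h.le_trans (h.imp_le_imp_right hY _) (h.imp_le_imp_imp_imp X.2 Y.2 Z.1)
  · exact h.le_trans (h.imp_le_imp_imp_imp X.1 Y.2 Z.1)
      (h.imp_le_imp_left (h.imp_le_imp_left hZ _) _)

/-- In the intervalization of a BCI-algebra with meet distributing
over →: X ⇛ Y ≾ (Z ⇛ X) ⇒ (Z ⇛ Y) in the Kulisch–Miranker order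
(componentwise ⪯, where x ⪯ y iff x→y = ⊤). -/
theorem stmt_9 {A : Type*} (imp : A → A → A) (top : A) (meet : A → A → A)
    (c1 : ∀ x y z : A, imp (imp y z) (imp (imp z x) (imp y x)) = top)
    (c2 : ∀ x y : A, imp x (imp (imp x y) y) = top)
    (c3 : ∀ x : A, imp x x = top)
    (c4 : ∀ x y : A, imp x y = top → imp y x = top → x = y)
    (meet_le_left : ∀ a b : A, imp (meet a b) a = top)
    (meet_le_right : ∀ a b : A, imp (meet a b) b = top)
    (le_meet : ∀ a b c : A, imp c a = top → imp c b = top → imp c (meet a b) = top)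
    (hdist : ∀ x y z : A, imp x (meet y z) = meet (imp x y) (imp x z)) :
    ∀ X Y Z : A × A,
      imp X.1 X.2 = top → imp Y.1 Y.2 = top → imp Z.1 Z.2 = top →
      imp (intervalArr9 imp X Y).1
        (intervalImp9 imp meet (intervalArr9 imp Z X) (intervalArr9 imp Z Y)).1 = top ∧
      imp (intervalArr9 imp X Y).2
        (intervalImp9 imp meet (intervalArr9 imp Z X) (intervalArr9 imp Z Y)).2 = top :=
  stmt_9_general imp top meet c1 c2 c3 c4 le_meet
end

section
/- Let (A, →, ⊤) be a BCI-algebra whose induced partial order ⪯ is a meet-semilattice with meet ∧ satisfying x→(y∧z) = (x→y)∧(x→z) for all x, y, z ∈ A. Let 𝔸 = {(a,b) ∈ A×A : a ⪯ b}, and define X ⇛ Y = [X̄→Y̲, X̲→Ȳ], X ⇒ Y = [(X̲→Y̲)∧(X̄→Ȳ), X̲→Ȳ], X ≪ Y iff X̄ ⪯ Y̲, and X ≾ Y iff X̲ ⪯ Y̲ and X̄ ⪯ Ȳ. Then: (OPa) if X ≪ Y then X ⇒ Y = [⊤,⊤]; and (OPb) if X ⇛ Y = [⊤,⊤] then X ≾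 Y. -/
/-! In a BCI-algebra `⊤` is maximal for `⪯` (by C-2, C-3, C-4), so C-1 makes `⪯` transitive.
Both claims are then chains of `⪯` through the endpoints `X̲ ⪯ X̄ ⪯ Y̲ ⪯ Ȳ`, together with
`⊤ ∧ ⊤ = ⊤`, which follows from `⊤ ⪯ ⊤ ∧ ⊤` by maximality of `⊤`. -/

/-- The best interval representation ⇛ : X ⇛ Y = [X̄→Y̲, X̲→Ȳ],
represented on pairs of endpoints. -/
def intervalArr13 {A : Type*} (imp : A → A → A) (P Q : A × A) : A × A :=
  (imp P.2 Q.1, imp P.1 Q.2)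

/-- The interval implication ⇒ : X ⇒ Y = [(X̲→Y̲)∧(X̄→Ȳ), X̲→Ȳ],
represented on pairs of endpoints. -/
def intervalImp13 {A : Type*} (imp meet : A → A → A) (P Q : A × A) : A × A :=
  (meet (imp P.1 Q.1) (imp P.2 Q.2), imp P.1 Q.2)

section IntervalBCI

variable {A : Type*} {imp : A → A → A} {top : A}

theorem eq_top_of_top_imp_eq_top (c2 : ∀ x y : A, imp x (imp (imp x y) y) = top)
    (c3 : ∀ x : A, imp x x = top) (c4 : ∀ x y : A, imp x y = top → imp y x = top → x = y)
    {w : A} (h : imp top w = top) : w = top := by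
  have hw : imp w top = top := by
    have := c2 w w
    rwa [c3, h] at this
  exact c4 w top hw h

theorem imp_eq_top_trans (c1 : ∀ x y z : A, imp (imp y z) (imp (imp z x) (imp y x)) = top)
    (top_max : ∀ w : A, imp top w = top → w = top)
    {a b c : A} (hab : imp a b = top) (hbc : imp b c = top) : imp a c = top := by
  have := c1 c a b
  rw [hab] at this
  have := top_max _ this
  rw [hbc] at this
  exact top_max _ this

theorem intervalImp13_eq_top_top {meet : A → A → A}
    (trans : ∀ {a b c : A}, imp a b = top → imp b c = top → imp a c = top)
    (meet_top : meet top top = top) {X Y : A × A}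
    (hX : imp X.1 X.2 = top) (hY : imp Y.1 Y.2 = top) (hXY : imp X.2 Y.1 = top) :
    intervalImp13 imp meet X Y = (top, top) := by
  have h11 : imp X.1 Y.1 = top := trans hX hXY
  have h22 : imp X.2 Y.2 = top := trans hXY hY
  have h12 : imp X.1 Y.2 = top := trans h11 hY
  rw [intervalImp13, h11, h22, h12, meet_top]

theorem imp_eq_top_of_intervalArr13_eq_top_top
    (trans : ∀ {a b c : A}, imp a b = top → imp b c = top → imp a c = top) {X Y : A × A}
    (hX : imp X.1 X.2 = top) (hY : imp Y.1 Y.2 = top)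
    (h : intervalArr13 imp X Y = (top, top)) :
    imp X.1 Y.1 = top ∧ imp X.2 Y.2 = top := by
  have hXY : imp X.2 Y.1 = top := congrArg Prod.fst h
  exact ⟨trans hX hXY, trans hXY hY⟩

end IntervalBCI

theorem stmt_13_general {A : Type*} (imp : A → A → A) (top : A) (meet : A → A → A)
    (c1 : ∀ x y z : A, imp (imp y z) (imp (imp z x) (imp y x)) = top)
    (c2 : ∀ x y : A, imp x (imp (imp x y) y) = top)
    (c3 : ∀ x : A, imp x x = top)
    (c4 : ∀ x y : A, imp x y = top → imp y x = top → x = y)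
    (le_meet : ∀ a b c : A, imp c a = top → imp c b = top → imp c (meet a b) = top) :
    (∀ X Y : A × A, imp X.1 X.2 = top → imp Y.1 Y.2 = top →
      imp X.2 Y.1 = top → intervalImp13 imp meet X Y = (top, top)) ∧
    (∀ X Y : A × A, imp X.1 X.2 = top → imp Y.1 Y.2 = top →
      intervalArr13 imp X Y = (top, top) →
      imp X.1 Y.1 = top ∧ imp X.2 Y.2 = top) := by
  have top_max : ∀ w : A, imp top w = top → w = top := fun _ =>
    eq_top_of_top_imp_eq_top c2 c3 c4
  have trans : ∀ {a b c : A}, imp a b = top → imp b c = top → imp a c = top :=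
    imp_eq_top_trans c1 top_max
  have meet_top : meet top top = top := top_max _ (le_meet _ _ _ (c3 top) (c3 top))
  exact ⟨fun _ _ => intervalImp13_eq_top_top (imp := imp) trans meet_top,
    fun _ _ => imp_eq_top_of_intervalArr13_eq_top_top (imp := imp) trans⟩

/-- In the intervalization of a BCI-algebra with meet distributing
over →: (OPa) if X ≪ Y (i.e. X̄ ⪯ Y̲) then X ⇒ Y = [⊤,⊤]; (OPb) if
X ⇛ Y = [⊤,⊤] then X ≾ Y (i.e. X̲ ⪯ Y̲ and X̄ ⪯ Ȳ). -/
theorem stmt_13 {A : Type*} (imp : A → A → A) (top : A) (meet : A → A → A)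
    (c1 : ∀ x y z : A, imp (imp y z) (imp (imp z x) (imp y x)) = top)
    (c2 : ∀ x y : A, imp x (imp (imp x y) y) = top)
    (c3 : ∀ x : A, imp x x = top)
    (c4 : ∀ x y : A, imp x y = top → imp y x = top → x = y)
    (meet_le_left : ∀ a b : A, imp (meet a b) a = top)
    (meet_le_right : ∀ a b : A, imp (meet a b) b = top)
    (le_meet : ∀ a b c : A, imp c a = top → imp c b = top → imp c (meet a b) = top)
    (hdist : ∀ x y z : A, imp x (meet y z) = meet (imp x y) (imp x z)) :
    (∀ X Y : A × A, imp X.1 X.2 = top → imp Y.1 Y.2 = top →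
      imp X.2 Y.1 = top → intervalImp13 imp meet X Y = (top, top)) ∧
    (∀ X Y : A × A, imp X.1 X.2 = top → imp Y.1 Y.2 = top →
      intervalArr13 imp X Y = (top, top) →
      imp X.1 Y.1 = top ∧ imp X.2 Y.2 = top) :=
  stmt_13_general imp top meet c1 c2 c3 c4 le_meet
end

section
/- Let (A, →, →, ⊤) be a Semi-BCI algebra in which both binary operations coincide (the same operation → plays both roles). Then (A, →, ⊤) is a BCI-algebra, i.e., for all x, y, z ∈ A: (C-1) (y→z)→((z→x)→(y→x)) = ⊤; (C-2) x→((x→y)→y) = ⊤; (C-3) x→x = ⊤; (C-4) if x→y = ⊤ and y→x = ⊤ then x = y. -/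
section ImpTop

variable {A : Type*} (imp : A → A → A) (top : A)

theorem imp_imp_self_eq_top
    (h3 : ∀ x y z : A, imp (imp x y) (imp (imp z x) (imp z y)) = top)
    (h4 : ∀ x : A, imp top x = x) (x y : A) :
    imp (imp x y) (imp x y) = top := by
  simpa only [h4] using h3 x y top

theorem imp_self_eq_top
    (h3 : ∀ x y z : A, imp (imp x y) (imp (imp z x) (imp z y)) = top)
    (h4 : ∀ x : A, imp top x = x) (x : A) :
    imp x x = top := by
  simpa only [h4] using imp_imp_self_eq_top imp top h3 h4 top x

end ImpTop

theorem stmt_18_general {A : Type*} (imp : A → A → A) (top : A)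
    (s1 : ∀ x y z : A, imp x (imp y z) = imp y (imp x z))
    (s3 : ∀ x y z : A, imp (imp x y) (imp (imp z x) (imp z y)) = top)
    (s4 : ∀ x : A, imp top x = x)
    (s7 : ∀ x y : A, imp x y = top → imp y x = top → x = y) :
    -- (C-1)
    (∀ x y z : A, imp (imp y z) (imp (imp z x) (imp y x)) = top) ∧
    -- (C-2)
    (∀ x y : A, imp x (imp (imp x y) y) = top) ∧
    -- (C-3)
    (∀ x : A, imp x x = top) ∧
    -- (C-4)
    (∀ x y : A, imp x y = top → imp y x = top → x = y) := by
  refine ⟨fun x y z => ?_, fun x y => ?_, imp_self_eq_top imp top s3 s4, s7⟩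
  · rw [s1]
    exact s3 z x y
  · rw [s1]
    exact imp_imp_self_eq_top imp top s3 s4 x y

/-- If (A, →, →, ⊤) is a Semi-BCI algebra in which both operations
coincide, then (A, →, ⊤) is a BCI-algebra. -/
theorem stmt_18 {A : Type*} (imp : A → A → A) (top : A)
    (s1 : ∀ x y z : A, imp x (imp y z) = imp y (imp x z))
    (s2 : ∀ x y z : A, imp x (imp y z) = imp y (imp x z))
    (s3 : ∀ x y z : A, imp (imp x y) (imp (imp z x) (imp z y)) = top)
    (s4 : ∀ x : A, imp top x = x)
    (s5 : ∀ x y z : A, imp x y = top → imp y z = top → imp x z = top)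
    (s6 : ∀ x y z : A, imp x y = top → imp y z = top → imp x z = top)
    (s7 : ∀ x y : A, imp x y = top → imp y x = top → x = y) :
    -- (C-1)
    (∀ x y z : A, imp (imp y z) (imp (imp z x) (imp y x)) = top) ∧
    -- (C-2)
    (∀ x y : A, imp x (imp (imp x y) y) = top) ∧
    -- (C-3)
    (∀ x : A, imp x x = top) ∧
    -- (C-4)
    (∀ x y : A, imp x y = top → imp y x = top → x = y) :=
  stmt_18_general imp top s1 s3 s4 s7
end
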